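/- arXiv:1511.06837 — 6 statements merged into one kernel-verified Lean document; each statement's English description precedes it below -/
import Mathlib

section
/- If H is a subgroup of a finite group G, then (|L(H)|/(|L(G)|·|G:H|)) · pd(H) ≤ pd(G). -/
open scoped Pointwise

def permutizer {G : Type*} [Group G] (X : Subgroup G) : Subgroup G :=
  Subgroup.closure {g : G |
    (Subgroup.zpowers g : Set G) * (X : Set G) = (X : Set G) * (Subgroup.zpowers g : Set G)}

noncomputable def pd (G : Type*) [Group G] : ℚ :=
  (∑ᶠ X : Subgroup G, (Nat.card ↥(permutizer X) : ℚ)) /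
    ((Nat.card G : ℚ) * (Nat.card (Subgroup G) : ℚ))

noncomputable def PP (G : Type*) [Group G] : Subgroup G :=
  ⨅ H : Subgroup G, permutizer H

lemma permutizer_map_le {G : Type*} [Group G] (H : Subgroup G) (X : Subgroup H) :
    (permutizer X).map H.subtype ≤ permutizer (X.map H.subtype) := by
  rw [permutizer, MonoidHom.map_closure]
  apply Subgroup.closure_mono
  rintro _ ⟨g, hg, rfl⟩
  show (Subgroup.zpowers (H.subtype g) : Set G) * _ = _
  rw [← MonoidHom.map_zpowers, Subgroup.coe_map, Subgroup.coe_map, ← Set.image_mul,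
    ← Set.image_mul, hg]

lemma card_permutizer_le {G : Type*} [Group G] [Finite G] (H : Subgroup G) (X : Subgroup H) :
    Nat.card (permutizer X) ≤ Nat.card (permutizer (X.map H.subtype)) := by
  have h1 : Nat.card (permutizer X) = Nat.card ((permutizer X).map H.subtype) :=
    Nat.card_congr ((permutizer X).equivMapOfInjective _ H.subtype_injective).toEquiv
  rw [h1]
  exact Subgroup.card_le_of_le (permutizer_map_le H X)

theorem pd_monotone (G : Type*) [Group G] [Finite G] (H : Subgroup G) :
    (Nat.card (Subgroup ↥H) : ℚ) / ((Nat.card (Subgroup G) : ℚ) * (H.index : ℚ)) * pd ↥H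
      ≤ pd G := by
  classical
  have : Fintype G := Fintype.ofFinite G
  have : Fintype (Subgroup G) := Fintype.ofFinite _
  have : Fintype (Subgroup ↥H) := Fintype.ofFinite _
  have hsum : (∑ᶠ X : Subgroup H, (Nat.card ↥(permutizer X) : ℚ))
      ≤ ∑ᶠ X : Subgroup G, (Nat.card ↥(permutizer X) : ℚ) := by
    rw [finsum_eq_sum_of_fintype, finsum_eq_sum_of_fintype]
    have hinj : Function.Injective (fun X : Subgroup H => X.map H.subtype) :=
      fun X Y h => Subgroup.map_injective H.subtype_injective h
    calc ∑ X : Subgroup H, (Nat.card ↥(permutizer X) : ℚ)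
        ≤ ∑ X : Subgroup H, (Nat.card ↥(permutizer (X.map H.subtype)) : ℚ) := by
          apply Finset.sum_le_sum
          intro X _
          exact_mod_cast card_permutizer_le H X
      _ = ∑ Y ∈ Finset.univ.image (fun X : Subgroup H => X.map H.subtype),
            (Nat.card ↥(permutizer Y) : ℚ) := by
          rw [Finset.sum_image (fun a _ b _ h => hinj h)]
      _ ≤ ∑ Y : Subgroup G, (Nat.card ↥(permutizer Y) : ℚ) := by
          apply Finset.sum_le_sum_of_subset_of_nonneg (Finset.subset_univ _)
          intro Y _ _; positivity
  unfold pd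
  have hH : (0:ℚ) < Nat.card H := by exact_mod_cast Nat.card_pos
  have hLH : (0:ℚ) < Nat.card (Subgroup H) := by exact_mod_cast Nat.card_pos
  have hLG : (0:ℚ) < Nat.card (Subgroup G) := by exact_mod_cast Nat.card_pos
  have hG : (0:ℚ) < Nat.card G := by exact_mod_cast Nat.card_pos
  have hidx : (0:ℚ) < H.index := by
    have := Nat.pos_of_ne_zero H.index_ne_zero_of_finite
    exact_mod_cast this
  have hmul : (Nat.card H : ℚ) * (H.index : ℚ) = (Nat.card G : ℚ) := by
    exact_mod_cast congrArg (Nat.cast (R := ℚ)) H.card_mul_index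
  rw [div_mul_div_comm, div_le_div_iff₀ (by positivity) (by positivity)]
  have hS : (0:ℚ) ≤ ∑ᶠ X : Subgroup H, (Nat.card ↥(permutizer X) : ℚ) := by
    rw [finsum_eq_sum_of_fintype]; positivity
  calc (Nat.card (Subgroup H) : ℚ) * (∑ᶠ X : Subgroup H, (Nat.card ↥(permutizer X) : ℚ)) *
        ((Nat.card G : ℚ) * (Nat.card (Subgroup G) : ℚ))
      = (∑ᶠ X : Subgroup H, (Nat.card ↥(permutizer X) : ℚ)) *
        ((Nat.card (Subgroup G) : ℚ) * (H.index : ℚ) * ((Nat.card H : ℚ) *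
          (Nat.card (Subgroup H) : ℚ))) := by rw [← hmul]; ring
    _ ≤ (∑ᶠ X : Subgroup G, (Nat.card ↥(permutizer X) : ℚ)) *
        ((Nat.card (Subgroup G) : ℚ) * (H.index : ℚ) * ((Nat.card H : ℚ) *
          (Nat.card (Subgroup H) : ℚ))) := by
        apply mul_le_mul_of_nonneg_right hsum; positivity
end

section
/- If G and H are finite groups with coprime orders, then pd(G × H) = pd(G) · pd(H). -/
open scoped Pointwise

section Aux

variable {G H : Type*} [Group G] [Group H]

lemma set_prod_mul_prod (s u : Set G) (t v : Set H) :
    (s ×ˢ t) * (u ×ˢ v) = (s * u) ×ˢ (t * v) := by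
  ext ⟨x, y⟩
  constructor
  · rintro ⟨⟨a, b⟩, ⟨ha, hb⟩, ⟨c, d⟩, ⟨hc, hd⟩, heq⟩
    exact ⟨⟨a, ha, c, hc, congrArg Prod.fst heq⟩, ⟨b, hb, d, hd, congrArg Prod.snd heq⟩⟩
  · rintro ⟨⟨a, ha, c, hc, h1⟩, ⟨b, hb, d, hd, h2⟩⟩
    exact ⟨(a, b), ⟨ha, hb⟩, (c, d), ⟨hc, hd⟩, by simp [Prod.ext_iff, h1, h2]⟩

lemma zpowers_prod [Finite G] [Finite H] (h : Nat.Coprime (Nat.card G) (Nat.card H))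
    (g : G) (k : H) :
    Subgroup.zpowers ((g, k) : G × H) =
      (Subgroup.zpowers g).prod (Subgroup.zpowers k) := by
  apply le_antisymm
  · exact Subgroup.zpowers_le.mpr ⟨Subgroup.mem_zpowers g, Subgroup.mem_zpowers k⟩
  · have hg1 : ((g, 1) : G × H) ∈ Subgroup.zpowers ((g, k) : G × H) := by
      have hco : (Nat.card (Subgroup.zpowers g)).Coprime (Nat.card H) :=
        Nat.Coprime.coprime_dvd_left (Subgroup.card_subgroup_dvd_card _) h
      obtain ⟨x, hx⟩ := (powCoprime hco).surjective ⟨g, Subgroup.mem_zpowers g⟩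
      obtain ⟨j, hj⟩ := Subgroup.mem_zpowers_iff.mp x.2
      have hxg : (x : G) ^ (Nat.card H) = g := congrArg Subtype.val hx
      refine Subgroup.mem_zpowers_iff.mpr ⟨j * (Nat.card H : ℤ), ?_⟩
      have h1 : g ^ (j * (Nat.card H : ℤ)) = g := by
        rw [zpow_mul, hj, zpow_natCast, hxg]
      have h2 : k ^ (j * (Nat.card H : ℤ)) = 1 := by
        rw [mul_comm, zpow_mul, zpow_natCast, pow_card_eq_one', one_zpow]
      exact Prod.ext (by simpa using h1) (by simpa using h2)
    have h1k : ((1, k) : G × H) ∈ Subgroup.zpowers ((g, k) : G × H) := by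
      have hco : (Nat.card (Subgroup.zpowers k)).Coprime (Nat.card G) :=
        Nat.Coprime.coprime_dvd_left (Subgroup.card_subgroup_dvd_card _) h.symm
      obtain ⟨x, hx⟩ := (powCoprime hco).surjective ⟨k, Subgroup.mem_zpowers k⟩
      obtain ⟨j, hj⟩ := Subgroup.mem_zpowers_iff.mp x.2
      have hxk : (x : H) ^ (Nat.card G) = k := congrArg Subtype.val hx
      refine Subgroup.mem_zpowers_iff.mpr ⟨j * (Nat.card G : ℤ), ?_⟩
      have h1 : k ^ (j * (Nat.card G : ℤ)) = k := by
        rw [zpow_mul, hj, zpow_natCast, hxk]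
      have h2 : g ^ (j * (Nat.card G : ℤ)) = 1 := by
        rw [mul_comm, zpow_mul, zpow_natCast, pow_card_eq_one', one_zpow]
      exact Prod.ext (by simpa using h2) (by simpa using h1)
    rintro ⟨x, y⟩ ⟨hx, hy⟩
    obtain ⟨a, rfl⟩ := Subgroup.mem_zpowers_iff.mp hx
    obtain ⟨b, rfl⟩ := Subgroup.mem_zpowers_iff.mp hy
    have : ((g ^ a, k ^ b) : G × H) = ((g, 1) : G × H) ^ a * ((1, k) : G × H) ^ b := by
      simp [Prod.ext_iff]
    rw [this]
    exact mul_mem (zpow_mem hg1 a) (zpow_mem h1k b)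

lemma one_mem_permset (X : Subgroup G) :
    (1 : G) ∈ {g : G |
      (Subgroup.zpowers g : Set G) * (X : Set G)
        = (X : Set G) * (Subgroup.zpowers g : Set G)} := by
  have : ((Subgroup.zpowers (1 : G) : Subgroup G) : Set G) = (1 : Set G) := by
    simp [Subgroup.zpowers_one_eq_bot, Set.singleton_one]
  simp only [Set.mem_setOf_eq, this, one_mul, mul_one]

lemma permutizer_prod [Finite G] [Finite H] (h : Nat.Coprime (Nat.card G) (Nat.card H))
    (A : Subgroup G) (B : Subgroup H) :
    permutizer (A.prod B) = (permutizer A).prod (permutizer B) := by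
  unfold permutizer
  have hset : {p : G × H |
        (Subgroup.zpowers p : Set (G × H)) * (A.prod B : Set (G × H))
          = (A.prod B : Set (G × H)) * (Subgroup.zpowers p : Set (G × H))} =
      {g : G | (Subgroup.zpowers g : Set G) * (A : Set G)
          = (A : Set G) * (Subgroup.zpowers g : Set G)} ×ˢ
      {k : H | (Subgroup.zpowers k : Set H) * (B : Set H)
          = (B : Set H) * (Subgroup.zpowers k : Set H)} := by
    ext ⟨g, k⟩
    simp only [Set.mem_setOf_eq, Set.mem_prod]
    rw [zpowers_prod h g k, Subgroup.coe_prod, Subgroup.coe_prod,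
      set_prod_mul_prod, set_prod_mul_prod]
    refine Set.prod_eq_prod_iff_of_nonempty ?_
    exact ⟨(1 * 1, 1 * 1), Set.mul_mem_mul (one_mem _) (one_mem _),
      Set.mul_mem_mul (one_mem _) (one_mem _)⟩
  rw [hset, Subgroup.closure_prod (one_mem_permset A) (one_mem_permset B)]

lemma subgroup_eq_prod [Finite G] [Finite H] (h : Nat.Coprime (Nat.card G) (Nat.card H))
    (K : Subgroup (G × H)) :
    K = (K.map (MonoidHom.fst G H)).prod (K.map (MonoidHom.snd G H)) := by
  apply le_antisymm
  · rintro ⟨x, y⟩ hxy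
    exact ⟨⟨(x, y), hxy, rfl⟩, ⟨(x, y), hxy, rfl⟩⟩
  · rintro ⟨x, y⟩ ⟨hx, hy⟩
    obtain ⟨⟨a, b⟩, hab, rfl⟩ := hx
    obtain ⟨⟨c, d⟩, hcd, rfl⟩ := hy
    have h1 : ((a, 1) : G × H) ∈ K := by
      have := Subgroup.zpowers_le.mpr hab
      exact this (by rw [zpowers_prod h a b]; exact ⟨Subgroup.mem_zpowers a, one_mem _⟩)
    have h2 : ((1, d) : G × H) ∈ K := by
      have := Subgroup.zpowers_le.mpr hcd
      exact this (by rw [zpowers_prod h c d]; exact ⟨one_mem _, Subgroup.mem_zpowers d⟩)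
    have heq : ((a, d) : G × H) = (a, 1) * (1, d) := by simp
    exact heq ▸ mul_mem h1 h2

lemma map_fst_prod (A : Subgroup G) (B : Subgroup H) :
    (A.prod B).map (MonoidHom.fst G H) = A := by
  ext x
  constructor
  · rintro ⟨⟨a, b⟩, ⟨ha, hb⟩, rfl⟩
    exact ha
  · intro hx
    exact ⟨(x, 1), ⟨hx, one_mem _⟩, rfl⟩

lemma map_snd_prod (A : Subgroup G) (B : Subgroup H) :
    (A.prod B).map (MonoidHom.snd G H) = B := by
  ext y
  constructor
  · rintro ⟨⟨a, b⟩, ⟨ha, hb⟩, rfl⟩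
    exact hb
  · intro hy
    exact ⟨(1, y), ⟨one_mem _, hy⟩, rfl⟩

end Aux

theorem pd_prod_of_coprime (G H : Type*) [Group G] [Group H] [Finite G] [Finite H]
    (h : Nat.Coprime (Nat.card G) (Nat.card H)) :
    pd (G × H) = pd G * pd H := by
  classical
  -- the equivalence between subgroups of the product and pairs of subgroups
  let e : Subgroup G × Subgroup H ≃ Subgroup (G × H) :=
    { toFun := fun p => p.1.prod p.2
      invFun := fun K => (K.map (MonoidHom.fst G H), K.map (MonoidHom.snd G H))
      left_inv := fun p => by simp [map_fst_prod, map_snd_prod]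
      right_inv := fun K => (subgroup_eq_prod h K).symm }
  have hcardL : (Nat.card (Subgroup (G × H)) : ℚ)
      = (Nat.card (Subgroup G) : ℚ) * (Nat.card (Subgroup H) : ℚ) := by
    rw [← Nat.cast_mul, ← Nat.card_prod]
    exact congrArg _ (Nat.card_congr e.symm)
  have hcardG : (Nat.card (G × H) : ℚ) = (Nat.card G : ℚ) * (Nat.card H : ℚ) := by
    rw [← Nat.cast_mul, Nat.card_prod]
  have hperm : ∀ (A : Subgroup G) (B : Subgroup H),
      (Nat.card ↥(permutizer (A.prod B)) : ℚ)
        = (Nat.card ↥(permutizer A) : ℚ) * (Nat.card ↥(permutizer B) : ℚ) := by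
    intro A B
    rw [permutizer_prod h A B, ← Nat.cast_mul, ← Nat.card_prod]
    exact congrArg _ (Nat.card_congr (Subgroup.prodEquiv _ _).toEquiv)
  have hsum : (∑ᶠ X : Subgroup (G × H), (Nat.card ↥(permutizer X) : ℚ))
      = (∑ᶠ X : Subgroup G, (Nat.card ↥(permutizer X) : ℚ))
        * (∑ᶠ X : Subgroup H, (Nat.card ↥(permutizer X) : ℚ)) := by
    rw [← finsum_comp_equiv e]
    have : ∀ p : Subgroup G × Subgroup H,
        (Nat.card ↥(permutizer (e p)) : ℚ)
          = (Nat.card ↥(permutizer p.1) : ℚ) * (Nat.card ↥(permutizer p.2) : ℚ) :=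
      fun p => hperm p.1 p.2
    rw [finsum_congr this]
    haveI : Fintype (Subgroup G) := Fintype.ofFinite _
    haveI : Fintype (Subgroup H) := Fintype.ofFinite _
    rw [finsum_eq_sum_of_fintype, finsum_eq_sum_of_fintype, finsum_eq_sum_of_fintype,
      Fintype.sum_prod_type, Finset.sum_mul_sum]
  rw [pd, pd, pd, hsum, hcardL, hcardG, div_mul_div_comm]
  ring_nf
end

section
/- For the dihedral group D_{2n} of order 2n, the number of subgroups is |L(D_{2n})| = σ(n) + τ(n), where σ(n) is the sum of the divisors of n and τ(n) is the number of divisors of n. -/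
open scoped Pointwise

/-!
A subgroup `H` of `D_{2n}` is determined by its rotation subgroup `A ≤ ℤ/n` together with,
if `H` contains a reflection `sr j`, the coset `j + A`: the reflections of `H` are exactly the
`sr i` with `i ∈ j + A`. Conversely every such pair gives a subgroup, so the subgroups are counted
by `∑_A ([ℤ/n : A] + 1)`. Subgroups of the cyclic group `ℤ/n` correspond to divisors of `n`
through their index, which turns this sum into `σ(n) + τ(n)`.
-/

section Cyclic

variable {G : Type*} [CommGroup G] [IsCyclic G]

@[to_additive]
theorem IsCyclic.eq_ker_powMonoidHom_card [Finite G] (H : Subgroup G) :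
    H = (powMonoidHom (Nat.card H) : G →* G).ker := by
  refine Subgroup.eq_of_le_of_card_ge (fun g hg => ?_) ?_
  · exact congrArg Subtype.val (pow_card_eq_one' (x := (⟨g, hg⟩ : H)))
  · rw [IsCyclic.card_powMonoidHom_ker, Nat.gcd_eq_right H.card_subgroup_dvd_card]

@[to_additive]
theorem IsCyclic.index_injective [Finite G] :
    Function.Injective (Subgroup.index : Subgroup G → ℕ) := by
  intro H K h
  have hcard : Nat.card H = Nat.card K :=
    Nat.eq_of_mul_eq_mul_right (Nat.pos_of_ne_zero (h ▸ K.index_ne_zero_of_finite))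
      (by rw [H.card_mul_index, h, K.card_mul_index])
  rw [IsCyclic.eq_ker_powMonoidHom_card H, IsCyclic.eq_ker_powMonoidHom_card K, hcard]

@[to_additive]
theorem IsCyclic.sum_subgroup_index [Fintype G] {M : Type*} [AddCommMonoid M] (f : ℕ → M) :
    ∑ H : Subgroup G, f H.index = ∑ d ∈ (Nat.card G).divisors, f d := by
  refine Finset.sum_bij (fun H _ => H.index) (fun H _ => ?_) (fun H _ K _ h => index_injective h)
    (fun d hd => ⟨(powMonoidHom d : G →* G).range, Finset.mem_univ _, ?_⟩) (fun _ _ => rfl)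
  · exact Nat.mem_divisors.2 ⟨H.index_dvd_card, Nat.card_pos.ne'⟩
  · rw [IsCyclic.index_powMonoidHom_range, Nat.gcd_eq_right (Nat.dvd_of_mem_divisors hd)]

end Cyclic

namespace DihedralGroup

variable {n : ℕ}

def mkSubgroup (A : AddSubgroup (ZMod n)) (c : Option (ZMod n ⧸ A)) :
    Subgroup (DihedralGroup n) where
  carrier := {g | match g with
    | r i => i ∈ A
    | sr i => some (i : ZMod n ⧸ A) = c}
  one_mem' := A.zero_mem
  mul_mem' := by
    rintro (a | a) (b | b) ha hb
    · exact A.add_mem ha hb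
    · show some ((b - a : ZMod n) : ZMod n ⧸ A) = c
      rwa [QuotientAddGroup.mk_sub, (QuotientAddGroup.eq_zero_iff a).2 ha, sub_zero]
    · show some ((a + b : ZMod n) : ZMod n ⧸ A) = c
      rwa [QuotientAddGroup.mk_add, (QuotientAddGroup.eq_zero_iff b).2 hb, add_zero]
    · show b - a ∈ A
      exact QuotientAddGroup.eq_iff_sub_mem.1 (Option.some_inj.1 (hb.trans ha.symm))
  inv_mem' := by
    rintro (a | a) ha
    · exact A.neg_mem ha
    · exact ha

@[simp]
theorem r_mem_mkSubgroup {A : AddSubgroup (ZMod n)} {c : Option (ZMod n ⧸ A)} {i : ZMod n} :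
    r i ∈ mkSubgroup A c ↔ i ∈ A :=
  Iff.rfl

@[simp]
theorem sr_mem_mkSubgroup {A : AddSubgroup (ZMod n)} {c : Option (ZMod n ⧸ A)} {i : ZMod n} :
    sr i ∈ mkSubgroup A c ↔ some (i : ZMod n ⧸ A) = c :=
  Iff.rfl

def rotations (H : Subgroup (DihedralGroup n)) : AddSubgroup (ZMod n) where
  carrier := {i | r i ∈ H}
  zero_mem' := H.one_mem
  add_mem' ha hb := by simpa using H.mul_mem ha hb
  neg_mem' ha := H.inv_mem ha

theorem mkSubgroup_injective :
    Function.Injective fun p : Σ A : AddSubgroup (ZMod n), Option (ZMod n ⧸ A) =>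
      mkSubgroup p.1 p.2 := by
  rintro ⟨A, c⟩ ⟨B, d⟩ h
  have hmem (g : DihedralGroup n) : g ∈ mkSubgroup A c ↔ g ∈ mkSubgroup B d :=
    SetLike.ext_iff.1 h g
  obtain rfl : A = B := AddSubgroup.ext fun i => hmem (r i)
  have hcd : ∀ q, q ∈ c ↔ q ∈ d := by
    intro q
    obtain ⟨i, rfl⟩ := QuotientAddGroup.mk_surjective q
    simpa [eq_comm] using hmem (sr i)
  rw [Option.ext hcd]

theorem mkSubgroup_surjective :
    Function.Surjective fun p : Σ A : AddSubgroup (ZMod n), Option (ZMod n ⧸ A) =>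
      mkSubgroup p.1 p.2 := by
  intro H
  by_cases hsr : ∃ j, sr j ∈ H
  · obtain ⟨j, hj⟩ := hsr
    refine ⟨⟨rotations H, some j⟩, ?_⟩
    ext (i | i)
    · rfl
    · rw [sr_mem_mkSubgroup, Option.some_inj, QuotientAddGroup.eq_iff_sub_mem,
        ← H.mul_mem_cancel_left hj, sr_mul_sr]
      rfl
  · refine ⟨⟨rotations H, none⟩, ?_⟩
    ext (i | i)
    · rfl
    · simpa using fun hi => hsr ⟨i, hi⟩

noncomputable def subgroupEquivSigma :
    Subgroup (DihedralGroup n) ≃ Σ A : AddSubgroup (ZMod n), Option (ZMod n ⧸ A) :=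
  (Equiv.ofBijective _ ⟨mkSubgroup_injective, mkSubgroup_surjective⟩).symm

end DihedralGroup

theorem card_subgroup_dihedral (n : ℕ) (hn : 1 ≤ n) :
    Nat.card (Subgroup (DihedralGroup n)) = n.divisors.sum id + n.divisors.card := by
  have : NeZero n := ⟨by omega⟩
  calc Nat.card (Subgroup (DihedralGroup n))
      = Nat.card (Σ A : AddSubgroup (ZMod n), Option (ZMod n ⧸ A)) :=
        Nat.card_congr DihedralGroup.subgroupEquivSigma
    _ = ∑ A : AddSubgroup (ZMod n), (A.index + 1) := by
        simp only [Nat.card_sigma, Finite.card_option, AddSubgroup.index]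
    _ = ∑ d ∈ n.divisors, (d + 1) := by
        rw [IsAddCyclic.sum_addSubgroup_index (fun d => d + 1), Nat.card_zmod]
    _ = n.divisors.sum id + n.divisors.card := by
        rw [Finset.sum_add_distrib, Finset.card_eq_sum_ones]
        rfl
end

section
/- Let G be a finite group and p the smallest prime divisor of |G|. If P_G(X) is a proper subgroup of G for all X ∈ L(G) − L(P(G)), then pd(G) ≤ 1/p + ((p−1)·|L(P(G))|)/(p·|L(G)|). -/
open scoped Pointwise

/-!
Every permutizer has order at most `|G|`, and by hypothesis the permutizer of a subgroup outside
`L(P(G))` is proper, so its index is a nontrivial divisor of `|G|` and hence at least `p`.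
Summing these two bounds over `L(G)` gives the estimate.
-/

open Finset

theorem Finset.sum_le_card_filter_nsmul_add_card_filter_not_nsmul {ι M : Type*}
    [AddCommMonoid M] [PartialOrder M] [IsOrderedAddMonoid M]
    (s : Finset ι) (P : ι → Prop) [DecidablePred P] (f : ι → M) {a b : M}
    (ha : ∀ i ∈ s, P i → f i ≤ a) (hb : ∀ i ∈ s, ¬ P i → f i ≤ b) :
    ∑ i ∈ s, f i ≤ #{i ∈ s | P i} • a + #{i ∈ s | ¬ P i} • b := by
  rw [← s.sum_filter_add_sum_filter_not P]
  gcongr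
  · exact sum_le_card_nsmul _ _ _ fun i hi ↦ ha i (mem_filter.1 hi).1 (mem_filter.1 hi).2
  · exact sum_le_card_nsmul _ _ _ fun i hi ↦ hb i (mem_filter.1 hi).1 (mem_filter.1 hi).2

namespace Subgroup

variable {G : Type*} [Group G] [Finite G] {p : ℕ}

theorem le_index_of_ne_top {H : Subgroup G} (hH : H ≠ ⊤)
    (hmin : ∀ q : ℕ, q.Prime → q ∣ Nat.card G → p ≤ q) : p ≤ H.index := by
  have hidx : H.index ≠ 1 := by rwa [Ne, index_eq_one]
  calc p ≤ H.index.minFac :=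
        hmin _ (Nat.minFac_prime hidx) ((Nat.minFac_dvd _).trans H.index_dvd_card)
    _ ≤ H.index := Nat.minFac_le (Nat.pos_of_ne_zero H.index_ne_zero_of_finite)

theorem mul_card_le_card_of_ne_top {H : Subgroup G} (hH : H ≠ ⊤)
    (hmin : ∀ q : ℕ, q.Prime → q ∣ Nat.card G → p ≤ q) : p * Nat.card H ≤ Nat.card G := by
  rw [← H.card_mul_index, mul_comm]
  exact Nat.mul_le_mul_left _ (le_index_of_ne_top hH hmin)

end Subgroup

theorem pd_upper_bound_general (G : Type*) [Group G] [Finite G] (p : ℕ)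
    (hp : p.Prime)
    (hmin : ∀ q : ℕ, q.Prime → q ∣ Nat.card G → p ≤ q)
    (hproper : ∀ X : Subgroup G, ¬ X ≤ PP G → permutizer X ≠ ⊤) :
    pd G ≤ 1 / (p : ℚ) +
      ((p : ℚ) - 1) * (Nat.card {X : Subgroup G // X ≤ PP G} : ℚ) /
        ((p : ℚ) * (Nat.card (Subgroup G) : ℚ)) := by
  classical
  have := Fintype.ofFinite (Subgroup G)
  rw [pd]
  set m := Nat.card {X : Subgroup G // X ≤ PP G}
  set n := Nat.card (Subgroup G)
  have hp0 : (0 : ℚ) < p := mod_cast hp.pos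
  have hle_card (X : Subgroup G) : (Nat.card (permutizer X) : ℚ) ≤ Nat.card G :=
    mod_cast (permutizer X).card_le_card_group
  have hle_card_div (X : Subgroup G) (hX : ¬ X ≤ PP G) :
      (Nat.card (permutizer X) : ℚ) ≤ Nat.card G / p := by
    rw [le_div_iff₀ hp0, mul_comm]
    exact mod_cast Subgroup.mul_card_le_card_of_ne_top (hproper X hX) hmin
  have hsum : ∑ᶠ X : Subgroup G, (Nat.card (permutizer X) : ℚ) ≤
      m • (Nat.card G : ℚ) + (n - m) • ((Nat.card G : ℚ) / p) := by
    rw [finsum_eq_sum_of_fintype]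
    refine (sum_le_card_filter_nsmul_add_card_filter_not_nsmul _ (· ≤ PP G) _
      (fun X _ _ ↦ hle_card X) (fun X _ ↦ hle_card_div X)).trans_eq ?_
    rw [← Fintype.card_subtype, ← Fintype.card_subtype, Fintype.card_subtype_compl]
    simp only [m, n, Nat.card_eq_fintype_card]
  have hG : 0 < Nat.card G := Nat.card_pos
  have hn : 0 < n := Nat.card_pos
  have hmn : m ≤ n := Finite.card_subtype_le _
  rw [div_le_iff₀ (by positivity)]
  refine hsum.trans_eq ?_
  rw [nsmul_eq_mul, nsmul_eq_mul, Nat.cast_sub hmn]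
  field_simp
  ring

theorem pd_upper_bound (G : Type*) [Group G] [Finite G] (p : ℕ)
    (hp : p.Prime) (hdvd : p ∣ Nat.card G)
    (hmin : ∀ q : ℕ, q.Prime → q ∣ Nat.card G → p ≤ q)
    (hproper : ∀ X : Subgroup G, ¬ X ≤ PP G → permutizer X ≠ ⊤) :
    pd G ≤ 1 / (p : ℚ) +
      ((p : ℚ) - 1) * (Nat.card {X : Subgroup G // X ≤ PP G} : ℚ) /
        ((p : ℚ) * (Nat.card (Subgroup G) : ℚ)) :=
  pd_upper_bound_general G p hp hmin hproper
end

section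
/- For the dihedral group D_{2p} with p an odd prime, pd(D_{2p}) = 1. -/
open scoped Pointwise

/-!
Every subgroup of `D_{2n}` has full permutizer, so every summand in `pd` equals `|D_{2n}|`.
A subgroup of the rotation subgroup is normal, hence permutable with everything. A subgroup
containing a reflection `s` has all rotations in its permutizer (each rotation generates a normal
cyclic subgroup), and `s` together with the rotations generates the whole group.
-/

section Permutizer

open Subgroup

variable {G : Type*} [Group G]

theorem mem_permutizer_of_zpowers_le_normalizer {X : Subgroup G} {g : G}
    (h : zpowers g ≤ normalizer (X : Set G)) : g ∈ permutizer X :=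
  subset_closure (set_mul_normalizer_comm _ X h)

theorem mem_permutizer_of_zpowers_normal {g : G} (h : (zpowers g).Normal) (X : Subgroup G) :
    g ∈ permutizer X :=
  subset_closure (set_mul_normal_comm (X : Set G) (zpowers g)).symm

theorem le_permutizer (X : Subgroup G) : X ≤ permutizer X := fun _ hg =>
  mem_permutizer_of_zpowers_le_normalizer (zpowers_le.mpr (le_normalizer hg))

theorem permutizer_eq_top_of_normal (X : Subgroup G) [X.Normal] : permutizer X = ⊤ :=
  eq_top_iff.mpr fun _ _ =>
    mem_permutizer_of_zpowers_le_normalizer (by rw [normalizer_eq_top]; exact le_top)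

theorem pd_eq_one_of_forall_permutizer_eq_top [Finite G]
    (h : ∀ X : Subgroup G, permutizer X = ⊤) : pd G = 1 := by
  have : Fintype (Subgroup G) := Fintype.ofFinite _
  have hG : (Nat.card G : ℚ) ≠ 0 := by exact_mod_cast Nat.card_pos.ne'
  have hL : (Nat.card (Subgroup G) : ℚ) ≠ 0 := by exact_mod_cast Nat.card_pos.ne'
  rw [pd, finsum_eq_sum_of_fintype]
  simp only [h, card_top, Finset.sum_const, Finset.card_univ, nsmul_eq_mul,
    ← Nat.card_eq_fintype_card]
  field_simp

end Permutizer

namespace DihedralGroup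

variable {n : ℕ}

theorem normal_of_forall_sr_notMem {X : Subgroup (DihedralGroup n)} (hX : ∀ i, sr i ∉ X) :
    X.Normal where
  conj_mem x hx g := by
    rcases x with k | k
    · rcases g with i | i
      · simpa [r_mul_r, inv_r] using hx
      · simpa [sr_mul_r, inv_sr, sr_mul_sr] using X.inv_mem hx
    · exact absurd hx (hX k)

theorem zpowers_r_normal (j : ZMod n) : (Subgroup.zpowers (r j)).Normal :=
  normal_of_forall_sr_notMem fun i ⟨k, hk⟩ => by simp [r_zpow] at hk

theorem permutizer_eq_top (X : Subgroup (DihedralGroup n)) : permutizer X = ⊤ := by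
  by_cases hX : ∃ i, sr i ∈ X
  · obtain ⟨i, hi⟩ := hX
    have hr : ∀ j, r j ∈ permutizer X := fun j =>
      mem_permutizer_of_zpowers_normal (zpowers_r_normal j) X
    rw [eq_top_iff]
    rintro (j | j) -
    · exact hr j
    · rw [show sr j = sr i * r (j - i) by rw [sr_mul_r, add_sub_cancel]]
      exact mul_mem (le_permutizer X hi) (hr _)
  · have := normal_of_forall_sr_notMem fun i hi => hX ⟨i, hi⟩
    exact permutizer_eq_top_of_normal X

end DihedralGroup

theorem pd_dihedral_odd_prime_general (p : ℕ) (hp : p.Prime) :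
    pd (DihedralGroup p) = 1 := by
  have : NeZero p := ⟨hp.ne_zero⟩
  exact pd_eq_one_of_forall_permutizer_eq_top DihedralGroup.permutizer_eq_top

theorem pd_dihedral_odd_prime (p : ℕ) (hp : p.Prime) (hodd : Odd p) :
    pd (DihedralGroup p) = 1 :=
  pd_dihedral_odd_prime_general p hp
end

section
/- For every odd prime p, the subgroup commutativity degree of the dihedral group D_{2p} equals (7p³ − 5p² − 11p + 9)/(p⁴ + 4p³ − 2p² − 12p + 9). -/
open scoped Pointwise

noncomputable def sd (G : Type*) [Group G] : ℚ :=
  (Nat.card {HK : Subgroup G × Subgroup G //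
      (HK.1 : Set G) * (HK.2 : Set G) = (HK.2 : Set G) * (HK.1 : Set G)} : ℚ) /
    ((Nat.card (Subgroup G) : ℚ)) ^ 2

/-! The subgroups of `D_{2p}` are `⊥`, `⊤`, the rotations `⟨r 1⟩` and the `p` reflection
subgroups `⟨sr i⟩`, so there are `p + 3` of them. The first three are normal, so they permute
with every subgroup. Two reflection subgroups `⟨sr i⟩ ≠ ⟨sr j⟩` do not permute: `sr i * sr j =
r (j - i)` would have to lie in `⟨sr j⟩⟨sr i⟩ = {1, sr i, sr j, r (i - j)}`, forcing
`j - i = i - j`, which is impossible for `i ≠ j` since `p` is odd. Hence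
`(p + 3)² - p (p - 1) = 7p + 9` pairs permute, and `sd (D_{2p}) = (7p + 9) / (p + 3)²`,
the stated fraction reduced by `(p - 1)²`. -/

namespace DihedralGroup

open Subgroup

variable {n : ℕ}

theorem mem_zpowers_r_one {x : DihedralGroup n} : x ∈ zpowers (r 1) ↔ ∃ i, r i = x := by
  simp only [mem_zpowers_iff, r_one_zpow]
  constructor
  · rintro ⟨k, rfl⟩
    exact ⟨k, rfl⟩
  · rintro ⟨i, rfl⟩
    obtain ⟨k, rfl⟩ := ZMod.intCast_surjective i
    exact ⟨k, rfl⟩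

theorem mem_zpowers_sr {i : ZMod n} {x : DihedralGroup n} :
    x ∈ zpowers (sr i) ↔ x = 1 ∨ x = sr i := by
  rw [mem_zpowers_iff]
  constructor
  · rintro ⟨k, rfl⟩
    rcases Int.even_or_odd' k with ⟨m, rfl | rfl⟩
    · left
      rw [zpow_mul, zpow_two, sr_mul_self, one_zpow]
    · right
      rw [zpow_add_one, zpow_mul, zpow_two, sr_mul_self, one_zpow, one_mul]
  · rintro (rfl | rfl)
    · exact ⟨0, zpow_zero _⟩
    · exact ⟨1, zpow_one _⟩

instance normal_zpowers_r_one : (zpowers (r 1 : DihedralGroup n)).Normal where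
  conj_mem x hx g := by
    obtain ⟨i, rfl⟩ := mem_zpowers_r_one.1 hx
    refine mem_zpowers_r_one.2 ?_
    rcases g with j | j
    · exact ⟨i, by simp only [r_mul_r, inv_r]; ring_nf⟩
    · exact ⟨-i, by simp only [sr_mul_r, inv_sr, sr_mul_sr]; ring_nf⟩

theorem sr_ne_one (i : ZMod n) : sr i ≠ 1 := by
  simp [one_def, -r_zero]

theorem r_one_ne_one [Nontrivial (ZMod n)] : (r 1 : DihedralGroup n) ≠ 1 := by
  simp [one_def, -r_zero]

theorem sr_notMem_zpowers_r_one (i : ZMod n) : sr i ∉ zpowers (r 1) := by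
  simp [mem_zpowers_r_one]

theorem r_one_notMem_zpowers_sr [Nontrivial (ZMod n)] (i : ZMod n) : r 1 ∉ zpowers (sr i) := by
  simp [mem_zpowers_sr, r_one_ne_one]

theorem zpowers_sr_injective : Function.Injective fun i : ZMod n ↦ zpowers (sr i) := by
  intro i j (h : zpowers (sr i) = zpowers (sr j))
  have hi : sr i ∈ zpowers (sr j) := h ▸ mem_zpowers (sr i)
  simpa [mem_zpowers_sr, sr_ne_one] using hi

theorem eq_top_of_zpowers_r_one_le {H : Subgroup (DihedralGroup n)} (hR : zpowers (r 1) ≤ H)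
    {j : ZMod n} (hj : sr j ∈ H) : H = ⊤ := by
  rw [eq_top_iff]
  rintro (k | k) -
  · exact hR (mem_zpowers_r_one.2 ⟨k, rfl⟩)
  · have hk : sr j * r (k - j) = sr k := by rw [sr_mul_r, add_sub_cancel]
    exact hk ▸ H.mul_mem hj (hR (mem_zpowers_r_one.2 ⟨_, rfl⟩))

theorem eq_zpowers_r_one_of_le {H : Subgroup (DihedralGroup n)} (hR : zpowers (r 1) ≤ H)
    (hs : ∀ j, sr j ∉ H) : H = zpowers (r 1) := by
  refine le_antisymm (fun x hx ↦ ?_) hR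
  rcases x with k | k
  · exact mem_zpowers_r_one.2 ⟨k, rfl⟩
  · exact absurd hx (hs k)

theorem eq_bot_or_eq_zpowers_sr {H : Subgroup (DihedralGroup n)} (hr : ∀ i, r i ∈ H → i = 0) :
    H = ⊥ ∨ ∃ j, H = zpowers (sr j) := by
  by_cases hs : ∃ j, sr j ∈ H
  · obtain ⟨j, hj⟩ := hs
    refine Or.inr ⟨j, le_antisymm (fun x hx ↦ mem_zpowers_sr.2 ?_) (zpowers_le.2 hj)⟩
    rcases x with k | k
    · rw [hr k hx, r_zero]
      exact Or.inl rfl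
    · have hjk : r (j - k) ∈ H := sr_mul_sr k j ▸ H.mul_mem hx hj
      rw [sub_eq_zero.1 (hr _ hjk)]
      exact Or.inr rfl
  · refine Or.inl (eq_bot_iff.2 fun x hx ↦ ?_)
    rcases x with k | k
    · rw [hr k hx, r_zero]
      exact one_mem _
    · exact absurd ⟨k, hx⟩ hs

theorem coe_zpowers_sr_mul_comm_iff (hn : Odd n) {i j : ZMod n} :
    (zpowers (sr i) : Set (DihedralGroup n)) * zpowers (sr j) = zpowers (sr j) * zpowers (sr i) ↔
      i = j := by
  refine ⟨fun h ↦ ?_, fun h ↦ h ▸ rfl⟩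
  have hij : sr i * sr j ∈ (zpowers (sr j) : Set (DihedralGroup n)) * zpowers (sr i) :=
    h ▸ Set.mul_mem_mul (mem_zpowers _) (mem_zpowers _)
  obtain ⟨a, ha, b, hb, hab : a * b = sr i * sr j⟩ := hij
  rw [sr_mul_sr] at hab
  rcases mem_zpowers_sr.1 ha with rfl | rfl <;> rcases mem_zpowers_sr.1 hb with rfl | rfl
  · rw [mul_one, one_def] at hab
    exact (sub_eq_zero.1 (r.inj hab).symm).symm
  · simp at hab
  · simp at hab
  · rw [sr_mul_sr] at hab
    by_contra hne
    exact ZMod.ne_neg_self hn (sub_ne_zero.2 hne) (by rw [neg_sub]; exact r.inj hab)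

section prime

variable {p : ℕ} [Fact p.Prime]

theorem zpowers_r_one_le_of_r_mem {H : Subgroup (DihedralGroup p)} {i : ZMod p} (hi : i ≠ 0)
    (h : r i ∈ H) : zpowers (r 1) ≤ H := by
  have hpow : r i ^ (i⁻¹).val = r 1 := by
    rw [r_pow, ZMod.natCast_zmod_val, mul_inv_cancel₀ hi]
  exact zpowers_le.2 (hpow ▸ H.pow_mem h _)

theorem subgroup_cases (H : Subgroup (DihedralGroup p)) :
    H = ⊥ ∨ H = ⊤ ∨ H = zpowers (r 1) ∨ ∃ j, H = zpowers (sr j) := by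
  by_cases hr : ∃ i ≠ 0, r i ∈ H
  · obtain ⟨i, hi, hiH⟩ := hr
    have hR := zpowers_r_one_le_of_r_mem hi hiH
    by_cases hs : ∃ j, sr j ∈ H
    · obtain ⟨j, hj⟩ := hs
      exact Or.inr (Or.inl (eq_top_of_zpowers_r_one_le hR hj))
    · exact Or.inr (Or.inr (Or.inl (eq_zpowers_r_one_of_le hR (not_exists.1 hs))))
  · have hr' : ∀ i, r i ∈ H → i = 0 := fun i hi ↦ not_not.1 fun h ↦ hr ⟨i, h, hi⟩
    rcases eq_bot_or_eq_zpowers_sr hr' with h | h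
    · exact Or.inl h
    · exact Or.inr (Or.inr (Or.inr h))

theorem normal_or_eq_zpowers_sr (H : Subgroup (DihedralGroup p)) :
    H.Normal ∨ ∃ j, H = zpowers (sr j) := by
  rcases subgroup_cases H with rfl | rfl | rfl | h
  · exact Or.inl inferInstance
  · exact Or.inl inferInstance
  · exact Or.inl inferInstance
  · exact Or.inr h

theorem nat_card_subgroup : Nat.card (Subgroup (DihedralGroup p)) = p + 3 := by
  have huniv : (Set.univ : Set (Subgroup (DihedralGroup p))) =
      insert ⊥ (insert ⊤ (insert (zpowers (r 1)) (Set.range fun j ↦ zpowers (sr j)))) := by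
    refine (Set.eq_univ_of_forall fun H ↦ ?_).symm
    simpa only [Set.mem_insert_iff, Set.mem_range, eq_comm (b := H)] using subgroup_cases H
  have hR : zpowers (r 1) ∉ Set.range fun j : ZMod p ↦ zpowers (sr j) := by
    rintro ⟨j, hj : zpowers (sr j) = zpowers (r 1)⟩
    exact sr_notMem_zpowers_r_one j (hj ▸ mem_zpowers (sr j))
  have htop : (⊤ : Subgroup (DihedralGroup p)) ∉
      insert (zpowers (r 1)) (Set.range fun j ↦ zpowers (sr j)) := by
    rintro (h | ⟨j, hj : zpowers (sr j) = ⊤⟩)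
    · exact sr_notMem_zpowers_r_one 0 (h ▸ mem_top _)
    · exact r_one_notMem_zpowers_sr j (hj ▸ mem_top _)
  have hbot : (⊥ : Subgroup (DihedralGroup p)) ∉
      insert ⊤ (insert (zpowers (r 1)) (Set.range fun j ↦ zpowers (sr j))) := by
    rintro (h | h | ⟨j, hj : zpowers (sr j) = ⊥⟩)
    · exact bot_ne_top h
    · exact r_one_ne_one (mem_bot.1 (h ▸ mem_zpowers _))
    · exact sr_ne_one j (mem_bot.1 (hj ▸ mem_zpowers _))
  rw [← Set.ncard_univ, huniv, Set.ncard_insert_of_notMem hbot, Set.ncard_insert_of_notMem htop,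
    Set.ncard_insert_of_notMem hR, ← Nat.card_coe_set_eq,
    Nat.card_range_of_injective zpowers_sr_injective, Nat.card_zmod]

theorem compl_setOf_mul_comm (hp : Odd p) :
    {HK : Subgroup (DihedralGroup p) × Subgroup (DihedralGroup p) |
        (HK.1 : Set (DihedralGroup p)) * HK.2 = HK.2 * HK.1}ᶜ =
      Prod.map (fun i ↦ zpowers (sr i)) (fun j ↦ zpowers (sr j)) ''
        (Set.univ : Set (ZMod p)).offDiag := by
  ext ⟨H, K⟩
  simp only [Set.mem_compl_iff, Set.mem_ofPred_eq, Set.mem_image, Set.mem_offDiag, Set.mem_univ,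
    true_and, Prod.exists, Prod.map, Prod.mk.injEq]
  constructor
  · intro h
    rcases normal_or_eq_zpowers_sr H with hH | ⟨i, rfl⟩
    · exact absurd (set_mul_normal_comm K H).symm h
    rcases normal_or_eq_zpowers_sr K with hK | ⟨j, rfl⟩
    · exact absurd (set_mul_normal_comm _ K) h
    exact ⟨i, j, fun hij ↦ h ((coe_zpowers_sr_mul_comm_iff hp).2 hij), rfl, rfl⟩
  · rintro ⟨i, j, hij, rfl, rfl⟩ h
    exact hij ((coe_zpowers_sr_mul_comm_iff hp).1 h)

theorem nat_card_subgroup_pairs_mul_comm (hp : Odd p) :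
    Nat.card {HK : Subgroup (DihedralGroup p) × Subgroup (DihedralGroup p) //
        (HK.1 : Set (DihedralGroup p)) * HK.2 = HK.2 * HK.1} = 7 * p + 9 := by
  have hcompl := Set.ncard_add_ncard_compl
    {HK : Subgroup (DihedralGroup p) × Subgroup (DihedralGroup p) |
      (HK.1 : Set (DihedralGroup p)) * HK.2 = HK.2 * HK.1}
  rw [compl_setOf_mul_comm hp, Set.ncard_image_of_injective _
      (zpowers_sr_injective.prodMap zpowers_sr_injective), ← Finset.coe_univ,
    ← Finset.coe_offDiag, Set.ncard_coe_finset, Finset.offDiag_card, Finset.card_univ, ZMod.card,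
    Nat.card_prod, nat_card_subgroup, ← Nat.card_coe_set_eq, Set.coe_ofPred] at hcompl
  have := Nat.le_mul_self p
  zify [this] at hcompl ⊢
  linarith

end prime

end DihedralGroup

theorem sd_dihedral_odd_prime (p : ℕ) (hp : p.Prime) (hodd : Odd p) :
    sd (DihedralGroup p) =
      (7 * (p : ℚ) ^ 3 - 5 * p ^ 2 - 11 * p + 9) /
        ((p : ℚ) ^ 4 + 4 * p ^ 3 - 2 * p ^ 2 - 12 * p + 9) := by
  have := Fact.mk hp
  have hp1 : (p : ℚ) - 1 ≠ 0 := sub_ne_zero.2 (by exact_mod_cast hp.one_lt.ne')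
  calc sd (DihedralGroup p) = (7 * p + 9) / (p + 3) ^ 2 := by
        rw [sd, DihedralGroup.nat_card_subgroup_pairs_mul_comm hodd,
          DihedralGroup.nat_card_subgroup]
        push_cast
        ring
    _ = (7 * p + 9) * (p - 1) ^ 2 / ((p + 3) ^ 2 * (p - 1) ^ 2) :=
        (mul_div_mul_right _ _ (pow_ne_zero 2 hp1)).symm
    _ = _ := by congr 1 <;> ring
end
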